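/- For every λ ∈ ℚ with λ ≠ 0 and all words u, v ∈ L*: (1) Δ̄_λ(y)·(Δ̄_λ(u) ⧢_λ Δ̄_λ(v)) = Δ̄_λ(yu) ⧢_λ Δ̄_λ(v) = Δ̄_λ(u) ⧢_λ Δ̄_λ(yv), and (2) Δ̄_λ(d)·(Δ̄_λ(u) ⧢_λ Δ̄_λ(v)) = Δ̄_λ(du) ⧢_λ Δ̄_λ(v) + Δ̄_λ(u) ⧢_λ Δ̄_λ(dv) + λ·(Δ̄_λ(du) ⧢_λ Δ̄_λ(dv)), where · denotes the componentwise concatenation product on ℚ⟨L⟩ ⊗ ℚ⟨L⟩. -/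

import Mathlib

open scoped TensorProduct

/-- The two-letter alphabet `L = {d, y}`. -/
inductive Letter : Type
  | d : Letter
  | y : Letter
deriving DecidableEq

/-- `ℚ⟨L⟩`, the ℚ-vector space with basis the words on `L` (with the concatenation
product, it is the free noncommutative ℚ-algebra on `L`). -/
abbrev V : Type := MonoidAlgebra ℚ (FreeMonoid Letter)

/-- The basis vector corresponding to a word. -/
noncomputable def wrd (w : List Letter) : V :=
  MonoidAlgebra.single (FreeMonoid.ofList w) (1 : ℚ)

/-- The shuffle-type product `⧢_λ` on basis words, defined recursively by
(P1) `e ⧢ w = w ⧢ e = w`; (P2) `(yu) ⧢ v = u ⧢ (yv) = y(u ⧢ v)`;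
(P3) `(du) ⧢ (dv) = (1/λ)(d(u ⧢ v) − (du) ⧢ v − u ⧢ (dv))`. -/
noncomputable def shW (lam : ℚ) : List Letter → List Letter → V
  | [], v => wrd v
  | u@(_ :: _), [] => wrd u
  | (Letter.y :: u), v => wrd [Letter.y] * shW lam u v
  | (Letter.d :: u), (Letter.y :: v) => wrd [Letter.y] * shW lam (Letter.d :: u) v
  | (Letter.d :: u), (Letter.d :: v) =>
      lam⁻¹ • (wrd [Letter.d] * shW lam u v
        - shW lam (Letter.d :: u) v - shW lam u (Letter.d :: v))
termination_by u v => u.length + v.length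

/-- The ℚ-bilinear extension of `⧢_λ` to `ℚ⟨L⟩`. -/
noncomputable def shL (lam : ℚ) : V →ₗ[ℚ] V →ₗ[ℚ] V :=
  (Finsupp.lsum ℚ fun u => LinearMap.toSpanSingleton ℚ (V →ₗ[ℚ] V)
    ((Finsupp.lsum ℚ fun v =>
      LinearMap.toSpanSingleton ℚ V (shW lam (FreeMonoid.toList u) (FreeMonoid.toList v)))
      ∘ₗ (MonoidAlgebra.coeffLinearEquiv ℚ).toLinearMap))
    ∘ₗ (MonoidAlgebra.coeffLinearEquiv ℚ).toLinearMap

/-- The values of `Δ̄_λ` on letters: `Δ̄_λ(y) = e⊗y + y⊗e`,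
`Δ̄_λ(d) = e⊗d + d⊗e + λ·(d⊗d)`. -/
noncomputable def dval (lam : ℚ) : Letter → (V ⊗[ℚ] V)
  | Letter.y => 1 ⊗ₜ wrd [Letter.y] + wrd [Letter.y] ⊗ₜ 1
  | Letter.d => 1 ⊗ₜ wrd [Letter.d] + wrd [Letter.d] ⊗ₜ 1
      + lam • (wrd [Letter.d] ⊗ₜ wrd [Letter.d])

/-- `Δ̄_λ : ℚ⟨L⟩ → ℚ⟨L⟩ ⊗ ℚ⟨L⟩`, the unique morphism of unital ℚ-algebras
(concatenation product on the source, componentwise concatenation on the tensor square)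
with the prescribed values on the letters. -/
noncomputable def Delta (lam : ℚ) : V →ₐ[ℚ] (V ⊗[ℚ] V) :=
  MonoidAlgebra.lift ℚ (V ⊗[ℚ] V) (FreeMonoid Letter) (FreeMonoid.lift (dval lam))

/-- The componentwise extension of `⧢_λ` to `ℚ⟨L⟩ ⊗ ℚ⟨L⟩`:
`(a⊗b) ⧢ (c⊗d) = (a ⧢ c) ⊗ (b ⧢ d)`. -/
noncomputable def shT (lam : ℚ) (x z : V ⊗[ℚ] V) : V ⊗[ℚ] V :=
  (TensorProduct.map (TensorProduct.lift (shL lam)) (TensorProduct.lift (shL lam)))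
    ((TensorProduct.tensorTensorTensorComm ℚ V V V V) (x ⊗ₜ z))

/-- `T₋ ⊆ ℚ⟨L⟩`: the span of the words ending in the letter `d`. -/
noncomputable def Tneg : Submodule ℚ V :=
  Submodule.span ℚ {x : V | ∃ w : List Letter, x = wrd (w ++ [Letter.d])}

/-! For `y`, (P2) says that left multiplication by `y` commutes with `⧢_λ` in either argument.
For `d`, (P3) says exactly that left multiplication by `φ = 1 + λ d` is multiplicative,
`φ (u ⧢_λ v) = (φ u) ⧢_λ (φ v)`. Such identities for `a` and `b` pass to the componentwise
product for `a ⊗ b`, and `Δ̄_λ(y) = 1 ⊗ y + y ⊗ 1`,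
`1 + λ Δ̄_λ(d) = φ ⊗ φ`. -/

lemma wrd_mul (u v : List Letter) : wrd u * wrd v = wrd (u ++ v) := by
  simp [wrd, MonoidAlgebra.single_mul_single]

lemma bilin_ext_wrd {M : Type*} [AddCommGroup M] [Module ℚ M] {F G : V →ₗ[ℚ] V →ₗ[ℚ] M}
    (h : ∀ u v, F (wrd u) (wrd v) = G (wrd u) (wrd v)) : F = G := by
  ext a c
  simpa [wrd] using h a.toList c.toList

section Shuffle

variable (lam : ℚ)

lemma shL_wrd (u v : List Letter) : shL lam (wrd u) (wrd v) = shW lam u v := by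
  simp [shL, wrd, MonoidAlgebra.coeffLinearEquiv, MonoidAlgebra.coeff_single]

lemma shW_nil_right (u : List Letter) : shW lam u [] = wrd u := by
  cases u with
  | nil => simp [shW]
  | cons a u => cases a <;> simp [shW]

lemma shW_y_left (u v : List Letter) :
    shW lam (Letter.y :: u) v = wrd [Letter.y] * shW lam u v := by
  cases v with
  | nil => rw [shW_nil_right, shW_nil_right, wrd_mul]; rfl
  | cons b v => rw [shW]; simp

lemma shW_y_right (u v : List Letter) :
    shW lam u (Letter.y :: v) = wrd [Letter.y] * shW lam u v := by
  induction u with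
  | nil => simp only [shW, wrd_mul]; rfl
  | cons a u ih =>
    cases a with
    | y => rw [shW_y_left, shW_y_left, ih]
    | d => rw [shW]

lemma wrd_d_mul_shW (hlam : lam ≠ 0) (u v : List Letter) :
    wrd [Letter.d] * shW lam u v =
      shW lam (Letter.d :: u) v + shW lam u (Letter.d :: v)
        + lam • shW lam (Letter.d :: u) (Letter.d :: v) := by
  rw [show shW lam (Letter.d :: u) (Letter.d :: v) = _ by rw [shW], smul_smul,
    mul_inv_cancel₀ hlam, one_smul]
  abel

lemma mul_shL_of_wrd {a a' a'' : V}
    (h : ∀ u v, a * shW lam u v = shL lam (a' * wrd u) (a'' * wrd v)) (x z : V) :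
    a * shL lam x z = shL lam (a' * x) (a'' * z) := by
  have key : (shL lam).compr₂ (LinearMap.mulLeft ℚ a) =
      (shL lam).compl₁₂ (LinearMap.mulLeft ℚ a') (LinearMap.mulLeft ℚ a'') :=
    bilin_ext_wrd fun u v => by simpa [shL_wrd] using h u v
  exact LinearMap.congr_fun₂ key x z

lemma wrd_y_mul_shL_left (x z : V) :
    wrd [Letter.y] * shL lam x z = shL lam (wrd [Letter.y] * x) z := by
  simpa using mul_shL_of_wrd lam (a'' := 1)
    (fun u v => by rw [one_mul, wrd_mul, List.singleton_append, shL_wrd, shW_y_left]) x z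

lemma wrd_y_mul_shL_right (x z : V) :
    wrd [Letter.y] * shL lam x z = shL lam x (wrd [Letter.y] * z) := by
  simpa using mul_shL_of_wrd lam (a' := 1)
    (fun u v => by rw [one_mul, wrd_mul, List.singleton_append, shL_wrd, shW_y_right]) x z

lemma one_add_smul_wrd_d_mul_shL (hlam : lam ≠ 0) (x z : V) :
    (1 + lam • wrd [Letter.d]) * shL lam x z =
      shL lam ((1 + lam • wrd [Letter.d]) * x) ((1 + lam • wrd [Letter.d]) * z) := by
  refine mul_shL_of_wrd lam (fun u v => ?_) x z
  simp only [add_mul, one_mul, smul_mul_assoc, wrd_mul, map_add, map_smul, LinearMap.add_apply,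
    LinearMap.smul_apply, List.singleton_append, shL_wrd, wrd_d_mul_shW lam hlam]
  module

noncomputable def shTBilin : (V ⊗[ℚ] V) →ₗ[ℚ] (V ⊗[ℚ] V) →ₗ[ℚ] (V ⊗[ℚ] V) :=
  (TensorProduct.mk ℚ _ _).compr₂
    (TensorProduct.map (TensorProduct.lift (shL lam)) (TensorProduct.lift (shL lam)) ∘ₗ
      (TensorProduct.tensorTensorTensorComm ℚ V V V V).toLinearMap)

lemma shT_eq_shTBilin (X Z : V ⊗[ℚ] V) : shT lam X Z = shTBilin lam X Z := rfl

lemma tmul_mul_shT {a a' a'' b b' b'' : V}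
    (ha : ∀ x z, a * shL lam x z = shL lam (a' * x) (a'' * z))
    (hb : ∀ x z, b * shL lam x z = shL lam (b' * x) (b'' * z)) (X Z : V ⊗[ℚ] V) :
    (a ⊗ₜ b) * shT lam X Z = shT lam ((a' ⊗ₜ b') * X) ((a'' ⊗ₜ b'') * Z) := by
  simp only [shT_eq_shTBilin]
  induction X using TensorProduct.induction_on with
  | zero => simp
  | add X X' hX hX' => simp only [map_add, LinearMap.add_apply, mul_add, hX, hX']
  | tmul x x' =>
    induction Z using TensorProduct.induction_on with
    | zero => simp
    | add Z Z' hZ hZ' => simp only [map_add, mul_add, hZ, hZ']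
    | tmul z z' => simp [shTBilin, Algebra.TensorProduct.tmul_mul_tmul, ha, hb]

lemma dval_y_mul_shT_left (X Z : V ⊗[ℚ] V) :
    dval lam Letter.y * shT lam X Z = shT lam (dval lam Letter.y * X) Z := by
  have h1 : ∀ x z : V, 1 * shL lam x z = shL lam (1 * x) (1 * z) := by simp
  have hy : ∀ x z : V, wrd [Letter.y] * shL lam x z = shL lam (wrd [Letter.y] * x) (1 * z) := by
    simpa using wrd_y_mul_shL_left lam
  simpa only [dval, add_mul, ← Algebra.TensorProduct.one_def, one_mul, shT_eq_shTBilin, map_add,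
    LinearMap.add_apply] using
    congrArg₂ (· + ·) (tmul_mul_shT lam h1 hy X Z) (tmul_mul_shT lam hy h1 X Z)

lemma dval_y_mul_shT_right (X Z : V ⊗[ℚ] V) :
    dval lam Letter.y * shT lam X Z = shT lam X (dval lam Letter.y * Z) := by
  have h1 : ∀ x z : V, 1 * shL lam x z = shL lam (1 * x) (1 * z) := by simp
  have hy : ∀ x z : V, wrd [Letter.y] * shL lam x z = shL lam (1 * x) (wrd [Letter.y] * z) := by
    simpa using wrd_y_mul_shL_right lam
  simpa only [dval, add_mul, ← Algebra.TensorProduct.one_def, one_mul, shT_eq_shTBilin,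
    map_add] using
    congrArg₂ (· + ·) (tmul_mul_shT lam h1 hy X Z) (tmul_mul_shT lam hy h1 X Z)

lemma one_add_smul_dval_d :
    1 + lam • dval lam Letter.d = (1 + lam • wrd [Letter.d]) ⊗ₜ (1 + lam • wrd [Letter.d]) := by
  simp only [dval, Algebra.TensorProduct.one_def, TensorProduct.add_tmul, TensorProduct.tmul_add,
    TensorProduct.smul_tmul', TensorProduct.tmul_smul, smul_add, smul_smul]
  abel

lemma dval_d_mul_shT (hlam : lam ≠ 0) (X Z : V ⊗[ℚ] V) :
    dval lam Letter.d * shT lam X Z =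
      shT lam (dval lam Letter.d * X) Z + shT lam X (dval lam Letter.d * Z)
        + lam • shT lam (dval lam Letter.d * X) (dval lam Letter.d * Z) := by
  have hφ := one_add_smul_wrd_d_mul_shL lam hlam
  have h := tmul_mul_shT lam hφ hφ X Z
  simp only [← one_add_smul_dval_d, add_mul, one_mul, smul_mul_assoc, shT_eq_shTBilin, map_add,
    map_smul, LinearMap.add_apply, LinearMap.smul_apply] at h
  apply smul_right_injective _ hlam
  simp only [shT_eq_shTBilin]
  linear_combination (norm := module) h

lemma Delta_wrd_singleton (l : Letter) : Delta lam (wrd [l]) = dval lam l := by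
  simp [Delta, wrd, MonoidAlgebra.lift_single]

lemma Delta_wrd_cons (l : Letter) (u : List Letter) :
    Delta lam (wrd (l :: u)) = dval lam l * Delta lam (wrd u) := by
  rw [← List.singleton_append, ← wrd_mul, map_mul, Delta_wrd_singleton]

end Shuffle

/-- Compatibility of `Δ̄_λ` with `⧢_λ` on words (`λ ≠ 0`):
`Δ̄_λ(y)·(Δ̄_λ(u) ⧢ Δ̄_λ(v)) = Δ̄_λ(yu) ⧢ Δ̄_λ(v) = Δ̄_λ(u) ⧢ Δ̄_λ(yv)` and
`Δ̄_λ(d)·(Δ̄_λ(u) ⧢ Δ̄_λ(v)) = Δ̄_λ(du) ⧢ Δ̄_λ(v) + Δ̄_λ(u) ⧢ Δ̄_λ(dv)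
  + λ·(Δ̄_λ(du) ⧢ Δ̄_λ(dv))`. -/
theorem stmt_11 (lam : ℚ) (hlam : lam ≠ 0) (u v : List Letter) :
    (Delta lam (wrd [Letter.y]) * shT lam (Delta lam (wrd u)) (Delta lam (wrd v)) =
        shT lam (Delta lam (wrd (Letter.y :: u))) (Delta lam (wrd v)) ∧
      Delta lam (wrd [Letter.y]) * shT lam (Delta lam (wrd u)) (Delta lam (wrd v)) =
        shT lam (Delta lam (wrd u)) (Delta lam (wrd (Letter.y :: v)))) ∧
    Delta lam (wrd [Letter.d]) * shT lam (Delta lam (wrd u)) (Delta lam (wrd v)) =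
      shT lam (Delta lam (wrd (Letter.d :: u))) (Delta lam (wrd v)) +
        shT lam (Delta lam (wrd u)) (Delta lam (wrd (Letter.d :: v))) +
        lam • shT lam (Delta lam (wrd (Letter.d :: u))) (Delta lam (wrd (Letter.d :: v))) := by
  refine ⟨⟨?_, ?_⟩, ?_⟩
  · rw [Delta_wrd_singleton, Delta_wrd_cons, dval_y_mul_shT_left]
  · rw [Delta_wrd_singleton, Delta_wrd_cons, dval_y_mul_shT_right]
  · rw [Delta_wrd_singleton, Delta_wrd_cons, Delta_wrd_cons, dval_d_mul_shT lam hlam]
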